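/- arXiv:1604.07140 — 4 statements merged into one kernel-verified Lean document; each statement's English description precedes it below -/
import Mathlib

section
/- Let $a,c \geq 2$, $b \geq 1$ be integers with $ac - a - c \neq 0$. Consider $V = \mathbb{Q}^{a-1} \oplus \mathbb{Q}^{b+c}$ with the Mukai pairing, the anticanonical class $\kappa = c\sum H_i - ((a-1)(c-1)-1)\sum E_j$, and the $a+b+c-2$ simple roots $E_j - E_{j+1}$ ($1 \leq j \leq b+c-1$), $H_1 - E_1 - \cdots - E_c$, $H_i - H_{i+1}$ ($1 \leq i \leq a-2$). If additionally $\frac{1}{a}+\frac{1}{b}+\frac{1}{c} \neq 1$, then the simple roots together with $\kappa$ form a basis of $V$ (equivalently, they are linearly independent, since there are $a+b+c-1 = \dim V$ of them). -/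
open Finset

/-- The Picard lattice (tensored with ℚ) of `X_{a,b,c}`: `n = a-1` copies of `H`
and `m = b+c` copies of `E`. -/
abbrev MukaiV (n m : ℕ) : Type := (Fin n → ℚ) × (Fin m → ℚ)

/-- The Mukai pairing: `(H_i,H_j) = (c-1) - δ_{ij}`, `(H_i,E_j) = 0`, `(E_i,E_j) = -δ_{ij}`,
extended bilinearly. -/
def mukai (c : ℕ) {n m : ℕ} (v w : MukaiV n m) : ℚ :=
  ((c : ℚ) - 1) * (∑ i, v.1 i) * (∑ i, w.1 i)
    - ∑ i, v.1 i * w.1 i - ∑ j, v.2 j * w.2 j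

/-- The class `H_i` (0-indexed). -/
def Hvec (n m : ℕ) (i : ℕ) : MukaiV n m :=
  (fun k => if (k : ℕ) = i then 1 else 0, 0)

/-- The class `E_j` (0-indexed). -/
def Evec (n m : ℕ) (j : ℕ) : MukaiV n m :=
  (0, fun k => if (k : ℕ) = j then 1 else 0)

/-- The anticanonical class `κ = c ∑ H_i - ((a-1)(c-1)-1) ∑ E_j`. -/
def kappa (a c n m : ℕ) : MukaiV n m :=
  (fun _ => (c : ℚ), fun _ => -(((a : ℚ) - 1) * ((c : ℚ) - 1) - 1))

/-- The `k`-th simple root (0-indexed, `0 ≤ k ≤ a+b+c-3`): first the `b+c-1` roots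
`E_j - E_{j+1}`, then `H_1 - E_1 - ⋯ - E_c`, then the `a-2` roots `H_i - H_{i+1}`. -/
def root (a b c : ℕ) (k : ℕ) : MukaiV (a-1) (b+c) :=
  if k < b + c - 1 then Evec (a-1) (b+c) k - Evec (a-1) (b+c) (k+1)
  else if k = b + c - 1 then
    Hvec (a-1) (b+c) 0 - ∑ j ∈ Finset.range c, Evec (a-1) (b+c) j
  else Hvec (a-1) (b+c) (k - (b+c)) - Hvec (a-1) (b+c) (k - (b+c) + 1)

lemma eq_of_forall_succ_eq {α : Type*} {g : ℕ → α} {N : ℕ}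
    (h : ∀ i, i + 1 < N → g i = g (i + 1)) : ∀ i < N, g i = g 0 := by
  intro i hi
  induction i with
  | zero => rfl
  | succ i ih => rw [← h i hi, ih (by omega)]

lemma mul_add_mul_add_mul_sub_mul_mul_ne_zero {K : Type*} [Field K] {a b c : K}
    (ha : a ≠ 0) (hb : b ≠ 0) (hc : c ≠ 0) (h : 1 / a + 1 / b + 1 / c ≠ 1) :
    a * b + b * c + c * a - a * b * c ≠ 0 := by
  have : a * b + b * c + c * a - a * b * c = a * b * c * (1 / a + 1 / b + 1 / c - 1) := by
    field_simp
    ring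
  rw [this]
  exact mul_ne_zero (by positivity) (sub_ne_zero.mpr h)

lemma finrank_mukaiV (n m : ℕ) : Module.finrank ℚ (MukaiV n m) = n + m := by
  rw [Module.finrank_prod, Module.finrank_fin_fun, Module.finrank_fin_fun]

lemma kappa_eq (a c n m : ℕ) :
    kappa a c n m = (c : ℚ) • (∑ i ∈ range n, Hvec n m i)
      - (((a : ℚ) - 1) * ((c : ℚ) - 1) - 1) • (∑ j ∈ range m, Evec n m j) := by
  ext k <;>
    simp [kappa, Hvec, Evec, Prod.fst_sum, Prod.snd_sum, Finset.sum_apply, Finset.sum_ite_eq]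

lemma eq_sum_smul_Hvec_add_sum_smul_Evec (n m : ℕ) (x : MukaiV n m) :
    x = ∑ i : Fin n, x.1 i • Hvec n m i + ∑ j : Fin m, x.2 j • Evec n m j := by
  ext k <;>
    simp [Hvec, Evec, Prod.fst_sum, Prod.snd_sum, Finset.sum_apply, Fin.val_eq_val, mul_ite]

lemma linearMap_eq_zero_of_Hvec_Evec {Q : Type*} [AddCommGroup Q] [Module ℚ Q] {n m : ℕ}
    (π : MukaiV n m →ₗ[ℚ] Q) (hH : ∀ i < n, π (Hvec n m i) = 0)
    (hE : ∀ j < m, π (Evec n m j) = 0) : π = 0 := by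
  refine LinearMap.ext fun x => ?_
  rw [eq_sum_smul_Hvec_add_sum_smul_Evec n m x]
  simp [hH _ (Fin.is_lt _), hE _ (Fin.is_lt _)]

section SimpleRoots

variable {a b c : ℕ}

lemma root_of_lt {k : ℕ} (hk : k < b + c - 1) :
    root a b c k = Evec (a-1) (b+c) k - Evec (a-1) (b+c) (k+1) := by
  simp [root, hk]

lemma root_b_add_c_sub_one :
    root a b c (b + c - 1) = Hvec (a-1) (b+c) 0 - ∑ j ∈ range c, Evec (a-1) (b+c) j := by
  simp [root]

lemma root_add (hbc : 0 < b + c) (i : ℕ) :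
    root a b c (b + c + i) = Hvec (a-1) (b+c) i - Hvec (a-1) (b+c) (i+1) := by
  have h1 : ¬ b + c + i < b + c - 1 := by omega
  have h2 : b + c + i ≠ b + c - 1 := by omega
  simp [root, h1, h2]

variable {Q : Type*} [AddCommGroup Q] [Module ℚ Q] (π : MukaiV (a-1) (b+c) →ₗ[ℚ] Q)

lemma map_Evec_eq_of_map_root (ha : 1 ≤ a) (hroot : ∀ k < a + b + c - 2, π (root a b c k) = 0) : ∀ j < b + c, π (Evec (a-1) (b+c) j) = π (Evec (a-1) (b+c) 0) := by
  refine eq_of_forall_succ_eq fun j hj => ?_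
  rw [← sub_eq_zero, ← map_sub, ← root_of_lt (by omega)]
  exact hroot j (by omega)

lemma map_Hvec_eq_of_map_root (hroot : ∀ k < a + b + c - 2, π (root a b c k) = 0)
    (hbc : 0 < b + c) :
    ∀ i < a - 1, π (Hvec (a-1) (b+c) i) = π (Hvec (a-1) (b+c) 0) := by
  refine eq_of_forall_succ_eq fun i hi => ?_
  rw [← sub_eq_zero, ← map_sub, ← root_add hbc]
  exact hroot _ (by omega)

/-- Modulo the roots `E_j - E_{j+1}` and `H_i - H_{i+1}` all `E_j` become one class `e` and all
`H_i` one class `h`; the root `H_1 - E_1 - ⋯ - E_c` gives `h = c e`, and then `κ` gives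
`(ab + bc + ca - abc) e = 0`. -/
lemma linearMap_eq_zero_of_map_root_of_map_kappa (ha : 2 ≤ a) (hb : 1 ≤ b) (hc : 1 ≤ c)
    (h1 : 1 / (a : ℚ) + 1 / (b : ℚ) + 1 / (c : ℚ) ≠ 1)
    (hroot : ∀ k < a + b + c - 2, π (root a b c k) = 0)
    (hκ : π (kappa a c (a-1) (b+c)) = 0) : π = 0 := by
  set e := π (Evec (a-1) (b+c) 0)
  set h := π (Hvec (a-1) (b+c) 0)
  have hE := map_Evec_eq_of_map_root π (by omega) hroot
  have hH := map_Hvec_eq_of_map_root π hroot (by omega)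
  have hHE : h = (c : ℚ) • e := by
    have := hroot (b + c - 1) (by omega)
    rw [root_b_add_c_sub_one, map_sub, sub_eq_zero, map_sum,
      sum_congr rfl fun j hj => hE j (by simp at hj; omega)] at this
    simpa [← Nat.cast_smul_eq_nsmul ℚ] using this
  have hκ' : ((c : ℚ) * (a - 1)) • h - ((((a : ℚ) - 1) * (c - 1) - 1) * (b + c)) • e = 0 := by
    rw [kappa_eq, map_sub, map_smul, map_smul, map_sum, map_sum,
      sum_congr rfl fun i hi => hH i (mem_range.mp hi),
      sum_congr rfl fun j hj => hE j (mem_range.mp hj)] at hκ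
    simpa [← Nat.cast_smul_eq_nsmul ℚ, Nat.cast_sub (show 1 ≤ a by omega), mul_smul] using hκ
  have he : e = 0 := by
    have hq := mul_add_mul_add_mul_sub_mul_mul_ne_zero (a := (a : ℚ)) (b := b) (c := c)
      (by positivity) (by positivity) (by positivity) h1
    have : ((a : ℚ) * b + b * c + c * a - a * b * c) • e = 0 := by
      rw [← hκ', hHE]
      module
    exact (smul_eq_zero.mp this).resolve_left hq
  refine linearMap_eq_zero_of_Hvec_Evec π (fun i hi => ?_) (fun j hj => ?_)
  · rw [hH i hi]
    exact hHE.trans (by rw [he, smul_zero])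
  · exact (hE j hj).trans he

end SimpleRoots

def simpleRootsAndKappa (a b c : ℕ) (k : Fin (a + b + c - 1)) : MukaiV (a-1) (b+c) :=
  if (k : ℕ) < a + b + c - 2 then root a b c k else kappa a c (a-1) (b+c)

lemma span_simpleRootsAndKappa_eq_top {a b c : ℕ} (ha : 2 ≤ a) (hb : 1 ≤ b) (hc : 1 ≤ c)
    (h1 : 1 / (a : ℚ) + 1 / (b : ℚ) + 1 / (c : ℚ) ≠ 1) :
    Submodule.span ℚ (Set.range (simpleRootsAndKappa a b c)) = ⊤ := by
  set S := Submodule.span ℚ (Set.range (simpleRootsAndKappa a b c))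
  have hmem (k : Fin (a + b + c - 1)) : simpleRootsAndKappa a b c k ∈ S :=
    Submodule.subset_span (Set.mem_range_self k)
  have hzero : S.mkQ = 0 := by
    refine linearMap_eq_zero_of_map_root_of_map_kappa S.mkQ ha hb hc h1 (fun k hk => ?_) ?_
    · simpa [simpleRootsAndKappa, hk] using hmem ⟨k, by omega⟩
    · simpa [simpleRootsAndKappa] using hmem ⟨a + b + c - 2, by omega⟩
  simpa using congrArg LinearMap.ker hzero

theorem stmt8_general (a b c : ℕ) (ha : 2 ≤ a) (hb : 1 ≤ b) (hc : 2 ≤ c)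
    (h1 : 1 / (a : ℚ) + 1 / (b : ℚ) + 1 / (c : ℚ) ≠ 1) :
    LinearIndependent ℚ (fun k : Fin (a + b + c - 1) =>
      if (k : ℕ) < a + b + c - 2 then root a b c k else kappa a c (a-1) (b+c)) ∧
    Submodule.span ℚ (Set.range (fun k : Fin (a + b + c - 1) =>
      if (k : ℕ) < a + b + c - 2 then root a b c k else kappa a c (a-1) (b+c))) = ⊤ := by
  have hspan := span_simpleRootsAndKappa_eq_top ha hb (by omega) h1
  refine ⟨linearIndependent_of_top_le_span_of_card_eq_finrank hspan.ge ?_, hspan⟩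
  rw [Fintype.card_fin, finrank_mukaiV]
  omega

/-- If `1/a + 1/b + 1/c ≠ 1` and `ac - a - c ≠ 0`, the `a+b+c-2` simple roots together
with the anticanonical class `κ` form a basis of `ℚ^{a-1} ⊕ ℚ^{b+c}`. -/
theorem stmt8 (a b c : ℕ) (ha : 2 ≤ a) (hb : 1 ≤ b) (hc : 2 ≤ c)
    (h1 : 1 / (a : ℚ) + 1 / (b : ℚ) + 1 / (c : ℚ) ≠ 1)
    (h2 : (a : ℚ) * c - a - c ≠ 0) :
    LinearIndependent ℚ (fun k : Fin (a + b + c - 1) =>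
      if (k : ℕ) < a + b + c - 2 then root a b c k else kappa a c (a-1) (b+c)) ∧
    Submodule.span ℚ (Set.range (fun k : Fin (a + b + c - 1) =>
      if (k : ℕ) < a + b + c - 2 then root a b c k else kappa a c (a-1) (b+c))) = ⊤ :=
  stmt8_general a b c ha hb hc h1
end

section
/- Let $a,c \geq 2$, $b \geq 1$ with $\frac{1}{a}+\frac{1}{b}+\frac{1}{c} > 1$ and $ac - a - c > 0$. Let $V = \mathbb{Q}^{a-1}\oplus\mathbb{Q}^{b+c}$ with the Mukai pairing and $\kappa$ the anticanonical class. Then the Mukai pairing on $V$ is nondegenerate, and any $v \in V$ orthogonal to all $a+b+c-2$ simple roots is a rational multiple of $\kappa$. -/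
open Finset

lemma sum_indicator {n : ℕ} (i : ℕ) (hi : i < n) (f : Fin n → ℚ) :
    ∑ k, f k * (if (k : ℕ) = i then 1 else 0) = f ⟨i, hi⟩ := by
  rw [Finset.sum_eq_single ⟨i, hi⟩]
  · simp
  · intro b _ hb
    have : (b : ℕ) ≠ i := fun h => hb (Fin.ext h)
    simp [this]
  · simp

lemma sum_indicator' {n : ℕ} (i : ℕ) (hi : i < n) :
    ∑ k : Fin n, (if (k : ℕ) = i then (1:ℚ) else 0) = 1 := by
  have := sum_indicator i hi (fun _ => (1:ℚ))
  simpa using this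

lemma sum_indicator2 {n : ℕ} (i : ℕ) (hi : i < n) (f : Fin n → ℚ) :
    (∑ k : Fin n, if (k : ℕ) = i then f k else 0) = f ⟨i, hi⟩ := by
  rw [Finset.sum_eq_single ⟨i, hi⟩]
  · simp
  · intro b _ hb
    have : (b : ℕ) ≠ i := fun h => hb (Fin.ext h)
    simp [this]
  · simp

lemma mukai_Evec (c : ℕ) {n m : ℕ} (v : MukaiV n m) (j : ℕ) (hj : j < m) :
    mukai c v (Evec n m j) = -v.2 ⟨j, hj⟩ := by
  simp [mukai, Evec, sum_indicator2 j hj]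

lemma mukai_Hvec (c : ℕ) {n m : ℕ} (v : MukaiV n m) (i : ℕ) (hi : i < n) :
    mukai c v (Hvec n m i) = ((c:ℚ) - 1) * (∑ k, v.1 k) - v.1 ⟨i, hi⟩ := by
  simp [mukai, Hvec, sum_indicator2 i hi, sum_indicator' i hi]

lemma mukai_sub (c : ℕ) {n m : ℕ} (v w w' : MukaiV n m) :
    mukai c v (w - w') = mukai c v w - mukai c v w' := by
  simp only [mukai, Prod.fst_sub, Prod.snd_sub, Pi.sub_apply, mul_sub,
    Finset.sum_sub_distrib]
  ring

lemma mukai_add (c : ℕ) {n m : ℕ} (v w w' : MukaiV n m) :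
    mukai c v (w + w') = mukai c v w + mukai c v w' := by
  simp only [mukai, Prod.fst_add, Prod.snd_add, Pi.add_apply, mul_add,
    Finset.sum_add_distrib]
  ring

lemma mukai_sum (c : ℕ) {n m : ℕ} (v : MukaiV n m) {ι : Type*} (s : Finset ι)
    (f : ι → MukaiV n m) :
    mukai c v (∑ j ∈ s, f j) = ∑ j ∈ s, mukai c v (f j) := by
  induction s using Finset.cons_induction with
  | empty => simp [mukai]
  | cons j s hj ih => rw [Finset.sum_cons, Finset.sum_cons, mukai_add, ih]

lemma const_of_step {n : ℕ} (f : Fin n → ℚ)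
    (h : ∀ (i : ℕ) (hi : i + 1 < n), f ⟨i, Nat.lt_of_succ_lt hi⟩ = f ⟨i+1, hi⟩) :
    ∀ (i : ℕ) (hi : i < n), f ⟨i, hi⟩ = f ⟨0, Nat.lt_of_le_of_lt (Nat.zero_le i) hi⟩ := by
  intro i
  induction i with
  | zero => intro hi; rfl
  | succ k ih => intro hi; rw [← h k hi]; exact ih _

/-- The Mukai pairing is nondegenerate, and every vector orthogonal to all simple roots
is a rational multiple of the anticanonical class `κ`. -/
theorem stmt9 (a b c : ℕ) (ha : 2 ≤ a) (hb : 1 ≤ b) (hc : 2 ≤ c)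
    (h1 : 1 / (a : ℚ) + 1 / (b : ℚ) + 1 / (c : ℚ) > 1)
    (h2 : (a : ℚ) * c - a - c > 0) :
    (∀ v : MukaiV (a-1) (b+c), (∀ w : MukaiV (a-1) (b+c), mukai c v w = 0) → v = 0) ∧
    (∀ v : MukaiV (a-1) (b+c),
      (∀ k : ℕ, k < a + b + c - 2 → mukai c v (root a b c k) = 0) →
      ∃ t : ℚ, v = t • kappa a c (a-1) (b+c)) := by
  have ha1 : ((a - 1 : ℕ) : ℚ) = (a : ℚ) - 1 := by
    rw [Nat.cast_sub (by omega), Nat.cast_one]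
  have hcq : (2:ℚ) ≤ (c:ℚ) := by exact_mod_cast hc
  have hD : ((a:ℚ)-1) * ((c:ℚ)-1) - 1 = (a:ℚ)*c - a - c := by ring
  constructor
  · intro v hv
    have he : ∀ j : Fin (b+c), v.2 j = 0 := by
      intro j
      have h := hv (Evec (a-1) (b+c) j)
      rw [mukai_Evec c v j j.isLt] at h
      simpa using h
    have hh : ∀ i : Fin (a-1), v.1 i = ((c:ℚ)-1) * ∑ k, v.1 k := by
      intro i
      have h := hv (Hvec (a-1) (b+c) i)
      rw [mukai_Hvec c v i i.isLt] at h
      simp only [Fin.eta] at h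
      linarith
    have hS : (∑ k, v.1 k) = ((a:ℚ)-1) * (((c:ℚ)-1) * ∑ k, v.1 k) := by
      calc (∑ k, v.1 k) = ∑ _k : Fin (a-1), ((c:ℚ)-1) * ∑ k, v.1 k :=
            Finset.sum_congr rfl (fun i _ => hh i)
        _ = ((a:ℚ)-1) * (((c:ℚ)-1) * ∑ k, v.1 k) := by
            rw [Finset.sum_const, Finset.card_univ, Fintype.card_fin, nsmul_eq_mul, ha1]
    have hS0 : (∑ k, v.1 k) = 0 := by
      have h0 : (∑ k, v.1 k) * (((a:ℚ)-1) * ((c:ℚ)-1) - 1) = 0 := by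
        linear_combination -hS
      rcases mul_eq_zero.mp h0 with h | h
      · exact h
      · exfalso; rw [hD] at h; linarith
    have hh0 : ∀ i : Fin (a-1), v.1 i = 0 := by
      intro i; rw [hh i, hS0]; ring
    ext i
    · exact hh0 i
    · exact he i
  · intro v hv
    have he : ∀ (j : ℕ) (hj : j + 1 < b + c),
        v.2 ⟨j, Nat.lt_of_succ_lt hj⟩ = v.2 ⟨j+1, hj⟩ := by
      intro j hj
      have hk := hv j (by omega)
      rw [root, if_pos (by omega)] at hk
      rw [mukai_sub, mukai_Evec c v j (by omega), mukai_Evec c v (j+1) hj] at hk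
      linarith
    have hh : ∀ (i : ℕ) (hi : i + 1 < a - 1),
        v.1 ⟨i, Nat.lt_of_succ_lt hi⟩ = v.1 ⟨i+1, hi⟩ := by
      intro i hi
      have hk := hv (b+c+i) (by omega)
      rw [root, if_neg (by omega), if_neg (by omega)] at hk
      have h3 : b+c+i-(b+c) = i := by omega
      rw [h3] at hk
      rw [mukai_sub, mukai_Hvec c v i (by omega), mukai_Hvec c v (i+1) hi] at hk
      linarith
    have he' := const_of_step v.2 he
    have hh' := const_of_step v.1 hh
    have hpa : 0 < a - 1 := by omega
    have hpm : 0 < b + c := by omega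
    set h0 := v.1 ⟨0, hpa⟩ with hh0def
    set e0 := v.2 ⟨0, hpm⟩ with he0def
    have hS1 : (∑ k, v.1 k) = ((a:ℚ)-1) * h0 := by
      calc (∑ k, v.1 k) = ∑ _k : Fin (a-1), h0 := by
            refine Finset.sum_congr rfl (fun i _ => ?_)
            have := hh' i.val i.isLt
            simpa using this
        _ = ((a:ℚ)-1) * h0 := by
            rw [Finset.sum_const, Finset.card_univ, Fintype.card_fin, nsmul_eq_mul, ha1]
    -- middle root
    have hk := hv (b+c-1) (by omega)
    rw [root, if_neg (by omega), if_pos rfl] at hk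
    rw [mukai_sub, mukai_Hvec c v 0 (by omega), mukai_sum] at hk
    have hsum : ∑ j ∈ Finset.range c, mukai c v (Evec (a-1) (b+c) j) = -((c:ℚ) * e0) := by
      calc ∑ j ∈ Finset.range c, mukai c v (Evec (a-1) (b+c) j)
          = ∑ _j ∈ Finset.range c, -e0 := by
            refine Finset.sum_congr rfl (fun j hj => ?_)
            have hjc : j < b + c := by have := Finset.mem_range.mp hj; omega
            rw [mukai_Evec c v j hjc, he' j hjc]
        _ = -((c:ℚ) * e0) := by
            rw [Finset.sum_const, Finset.card_range, nsmul_eq_mul]; ring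
    rw [hsum, hS1] at hk
    have hrel : (((c:ℚ)-1) * (((a:ℚ)-1) * h0) - h0) + (c:ℚ) * e0 = 0 := by
      have : v.1 ⟨0, by omega⟩ = h0 := rfl
      linarith [hk]
    have hc0 : (c:ℚ) ≠ 0 := by linarith
    refine ⟨h0 / c, ?_⟩
    ext i
    · show v.1 i = (h0 / c) • (kappa a c (a-1) (b+c)).1 i
      have := hh' i.val i.isLt
      simp only [Fin.eta] at this
      rw [this]
      simp only [kappa, smul_eq_mul]
      field_simp
      rfl
    · show v.2 i = (h0 / c) • (kappa a c (a-1) (b+c)).2 i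
      have := he' i.val i.isLt
      simp only [Fin.eta] at this
      rw [this]
      simp only [kappa, smul_eq_mul]
      field_simp
      linarith [hrel]
end

section
/- Let $a,c \geq 2$, $b \geq 1$ be integers with $\frac{1}{a} + \frac{1}{b} + \frac{1}{c} > 1$ (so that $(a,b,c)$ corresponds to a finite root system $T_{a,b,c}$). On $V = \mathbb{R}^{a-1} \oplus \mathbb{R}^{b+c}$, the Mukai pairing restricted to the span of the $a+b+c-2$ simple roots $E_j - E_{j+1}$ ($1 \leq j \leq b+c-1$), $H_1 - E_1 - \cdots - E_c$, $H_i - H_{i+1}$ ($1 \leq i \leq a-2$) is negative definite. -/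
open Finset

/-- The real Picard space of `X_{a,b,c}`: `n = a-1` copies of `H`, `m = b+c` copies of `E`. -/
abbrev MukaiVR (n m : ℕ) : Type := (Fin n → ℝ) × (Fin m → ℝ)

/-- The Mukai pairing: `(H_i,H_j) = (c-1) - δ_{ij}`, `(H_i,E_j) = 0`, `(E_i,E_j) = -δ_{ij}`,
extended bilinearly. -/
def mukaiR (c : ℕ) {n m : ℕ} (v w : MukaiVR n m) : ℝ :=
  ((c : ℝ) - 1) * (∑ i, v.1 i) * (∑ i, w.1 i)
    - ∑ i, v.1 i * w.1 i - ∑ j, v.2 j * w.2 j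

/-- The class `H_i` (0-indexed). -/
def HvecR (n m : ℕ) (i : ℕ) : MukaiVR n m :=
  (fun k => if (k : ℕ) = i then 1 else 0, 0)

/-- The class `E_j` (0-indexed). -/
def EvecR (n m : ℕ) (j : ℕ) : MukaiVR n m :=
  (0, fun k => if (k : ℕ) = j then 1 else 0)

/-- The anticanonical class `κ = c ∑ H_i - ((a-1)(c-1)-1) ∑ E_j`. -/
def kappaR (a c n m : ℕ) : MukaiVR n m :=
  (fun _ => (c : ℝ), fun _ => -(((a : ℝ) - 1) * ((c : ℝ) - 1) - 1))

/-- The `k`-th simple root (0-indexed, `0 ≤ k ≤ a+b+c-3`): first the `b+c-1` roots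
`E_j - E_{j+1}`, then `H_1 - E_1 - ⋯ - E_c`, then the `a-2` roots `H_i - H_{i+1}`. -/
def rootR (a b c : ℕ) (k : ℕ) : MukaiVR (a-1) (b+c) :=
  if k < b + c - 1 then EvecR (a-1) (b+c) k - EvecR (a-1) (b+c) (k+1)
  else if k = b + c - 1 then
    HvecR (a-1) (b+c) 0 - ∑ j ∈ Finset.range c, EvecR (a-1) (b+c) j
  else HvecR (a-1) (b+c) (k - (b+c)) - HvecR (a-1) (b+c) (k - (b+c) + 1)

lemma sum_indicator_s13 (m j : ℕ) :
    ∑ t : Fin m, (if (t : ℕ) = j then (1:ℝ) else 0) = if j < m then 1 else 0 := by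
  by_cases hj : j < m
  · rw [if_pos hj, Finset.sum_eq_single (⟨j, hj⟩ : Fin m)]
    · simp
    · intro t _ ht
      rw [if_neg]
      simpa [Fin.ext_iff] using ht
    · simp
  · rw [if_neg hj]
    apply Finset.sum_eq_zero
    intro t _
    rw [if_neg]
    intro h
    exact hj (h ▸ t.isLt)

def Lmap (c n m : ℕ) : MukaiVR n m →ₗ[ℝ] ℝ where
  toFun v := (c : ℝ) * (∑ i, v.1 i) + ∑ j, v.2 j
  map_add' v w := by
    simp [Finset.sum_add_distrib]
    ring
  map_smul' r v := by
    simp only [Prod.smul_fst, Prod.smul_snd, Pi.smul_apply, smul_eq_mul,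
      RingHom.id_apply, ← Finset.mul_sum]
    ring

lemma Lmap_Evec (c n m j : ℕ) :
    Lmap c n m (EvecR n m j) = if j < m then 1 else 0 := by
  have he : Lmap c n m (EvecR n m j)
      = (c:ℝ) * (∑ _i : Fin n, (0:ℝ)) + ∑ t : Fin m, (if (t:ℕ) = j then (1:ℝ) else 0) := rfl
  rw [he, sum_indicator_s13]
  simp

lemma Lmap_Hvec (c n m i : ℕ) :
    Lmap c n m (HvecR n m i) = (c : ℝ) * (if i < n then 1 else 0) := by
  have he : Lmap c n m (HvecR n m i)
      = (c:ℝ) * (∑ t : Fin n, (if (t:ℕ) = i then (1:ℝ) else 0)) + ∑ _j : Fin m, (0:ℝ) := rfl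
  rw [he, sum_indicator_s13]
  simp

lemma Lmap_root (a b c : ℕ) (ha : 2 ≤ a) (hb : 1 ≤ b) (hc : 2 ≤ c)
    (k : ℕ) (hk : k < a + b + c - 2) :
    Lmap c (a-1) (b+c) (rootR a b c k) = 0 := by
  unfold rootR
  split_ifs with h1 h2
  · rw [map_sub, Lmap_Evec, Lmap_Evec, if_pos (by omega), if_pos (by omega)]
    ring
  · rw [map_sub, Lmap_Hvec, map_sum, if_pos (by omega)]
    have : ∀ j ∈ Finset.range c, Lmap c (a-1) (b+c) (EvecR (a-1) (b+c) j) = 1 := by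
      intro j hj
      rw [Lmap_Evec, if_pos (by simp at hj; omega)]
    rw [Finset.sum_congr rfl this]
    simp
  · rw [map_sub, Lmap_Hvec, Lmap_Hvec, if_pos (by omega), if_pos (by omega)]
    ring

/-- If `1/a + 1/b + 1/c > 1`, the Mukai pairing is negative definite on the span of
the simple roots of `T_{a,b,c}`. -/
theorem stmt13 (a b c : ℕ) (ha : 2 ≤ a) (hb : 1 ≤ b) (hc : 2 ≤ c)
    (h : 1 / (a : ℚ) + 1 / (b : ℚ) + 1 / (c : ℚ) > 1) :
    ∀ v ∈ Submodule.span ℝ (Set.range (fun k : Fin (a + b + c - 2) => rootR a b c k)),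
      v ≠ 0 → mukaiR c v v < 0 := by
  -- numeric key inequality
  have ha0 : (0:ℚ) < a := by exact_mod_cast (by omega : 0 < a)
  have hb0 : (0:ℚ) < b := by exact_mod_cast (by omega : 0 < b)
  have hc0 : (0:ℚ) < c := by exact_mod_cast (by omega : 0 < c)
  have hkeyQ : (a:ℚ)*b*c < (a:ℚ)*b + (b:ℚ)*c + (c:ℚ)*a := by
    have h' := mul_lt_mul_of_pos_right h (by positivity : (0:ℚ) < (a:ℚ)*b*c)
    have e1 : ((1:ℚ)/a + 1/b + 1/c) * ((a:ℚ)*b*c) = (a:ℚ)*b + (b:ℚ)*c + (c:ℚ)*a := by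
      field_simp
      ring
    rw [e1, one_mul] at h'
    exact h'
  have hkeyN : a*b*c < a*b + b*c + c*a := by exact_mod_cast hkeyQ
  have hkey : (a:ℝ)*b*c < (a:ℝ)*b + (b:ℝ)*c + (c:ℝ)*a := by exact_mod_cast hkeyN
  intro v hv hv0
  -- v is in the kernel of L
  have hvL : (c:ℝ) * (∑ i, v.1 i) + ∑ j, v.2 j = 0 := by
    have hsub : Submodule.span ℝ
        (Set.range (fun k : Fin (a + b + c - 2) => rootR a b c k)) ≤
        LinearMap.ker (Lmap c (a-1) (b+c)) := by
      rw [Submodule.span_le]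
      rintro x ⟨k, rfl⟩
      exact LinearMap.mem_ker.mpr (Lmap_root a b c ha hb hc k k.isLt)
    exact hsub hv
  set S := ∑ i, v.1 i with hS_def
  set T := ∑ j, v.2 j with hT_def
  set X := ∑ i, v.1 i * v.1 i with hX_def
  set Y := ∑ j, v.2 j * v.2 j with hY_def
  have hgoal : mukaiR c v v = ((c:ℝ) - 1) * S * S - X - Y := rfl
  have hX0 : 0 ≤ X := Finset.sum_nonneg fun i _ => mul_self_nonneg _
  have hY0 : 0 ≤ Y := Finset.sum_nonneg fun j _ => mul_self_nonneg _
  have hCS1 : S^2 ≤ ((a:ℝ) - 1) * X := by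
    have := sq_sum_le_card_mul_sum_sq (s := (Finset.univ : Finset (Fin (a-1)))) (f := v.1)
    simp only [Finset.card_univ, Fintype.card_fin] at this
    calc S^2 ≤ ((a-1 : ℕ) : ℝ) * ∑ i, v.1 i ^ 2 := this
    _ = ((a:ℝ) - 1) * X := by
        rw [Nat.cast_sub (by omega), Nat.cast_one]
        congr 1
        exact Finset.sum_congr rfl fun i _ => sq (v.1 i)
  have hCS2 : T^2 ≤ ((b:ℝ) + c) * Y := by
    have := sq_sum_le_card_mul_sum_sq (s := (Finset.univ : Finset (Fin (b+c)))) (f := v.2)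
    simp only [Finset.card_univ, Fintype.card_fin] at this
    calc T^2 ≤ ((b+c : ℕ) : ℝ) * ∑ j, v.2 j ^ 2 := this
    _ = ((b:ℝ) + c) * Y := by
        push_cast
        congr 1
        exact Finset.sum_congr rfl fun j _ => sq (v.2 j)
  by_cases hS : S = 0
  · have hT : T = 0 := by
      have hcs : (c:ℝ) * S = 0 := by rw [hS]; ring
      linarith [hvL]
    have hXY : 0 < X + Y := by
      rcases lt_or_eq_of_le (add_nonneg hX0 hY0) with hlt | heq
      · exact hlt
      · exfalso
        apply hv0
        have hX' : X = 0 := by linarith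
        have hY' : Y = 0 := by linarith
        have h1 : v.1 = 0 := by
          funext i
          have h2 := (Finset.sum_eq_zero_iff_of_nonneg
            (fun i _ => mul_self_nonneg (v.1 i))).mp hX' i (Finset.mem_univ i)
          exact mul_self_eq_zero.mp h2
        have h2 : v.2 = 0 := by
          funext j
          have h2 := (Finset.sum_eq_zero_iff_of_nonneg
            (fun j _ => mul_self_nonneg (v.2 j))).mp hY' j (Finset.mem_univ j)
          exact mul_self_eq_zero.mp h2
        exact Prod.ext h1 h2
    rw [hgoal, hS]
    linarith
  · have hS2 : 0 < S^2 := by positivity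
    have hT : T = -((c:ℝ) * S) := by
      linarith [hvL]
    have hCS2' : (c:ℝ)^2 * S^2 ≤ ((b:ℝ) + c) * Y := by
      calc (c:ℝ)^2 * S^2 = T^2 := by rw [hT]; ring
      _ ≤ ((b:ℝ) + c) * Y := hCS2
    have ha1 : (0:ℝ) < (a:ℝ) - 1 := by
      have : (1:ℝ) < a := by exact_mod_cast (by omega : 1 < a)
      linarith
    have hbc : (0:ℝ) < (b:ℝ) + c := by positivity
    have key2 : ((a:ℝ) - 1) * ((b:ℝ) + c) * (((c:ℝ) - 1) * S * S - X - Y) < 0 := by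
      have h1' := mul_le_mul_of_nonneg_left hCS1 (le_of_lt hbc)
      have h2' := mul_le_mul_of_nonneg_left hCS2' (le_of_lt ha1)
      have h3' := mul_lt_mul_of_pos_right hkey hS2
      nlinarith [h1', h2', h3', hS2]
    rw [hgoal]
    by_contra hle
    push_neg at hle
    have := mul_nonneg (le_of_lt (mul_pos ha1 hbc)) hle
    linarith
end

section
/- Let $a,c \geq 2$, $b \geq 1$ be integers with $\frac{1}{a}+\frac{1}{b}+\frac{1}{c} > 1$ and $ac-a-c > 0$. On $V = \mathbb{R}^{a-1}\oplus\mathbb{R}^{b+c}$ with the Mukai pairing, the form has signature $(1, a+b+c-2)$: it is positive definite on the line spanned by $\kappa$ and negative definite on the orthogonal complement $\kappa^\perp$. -/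
open Finset

set_option maxHeartbeats 1000000 in
/-- Under the hypotheses, the Mukai pairing has signature `(1, a+b+c-2)`: it is positive
on the line spanned by `κ` and negative definite on the orthogonal complement `κ^⊥`. -/
theorem stmt17 (a b c : ℕ) (ha : 2 ≤ a) (hb : 1 ≤ b) (hc : 2 ≤ c)
    (h1 : 1 / (a : ℚ) + 1 / (b : ℚ) + 1 / (c : ℚ) > 1)
    (h2 : (a : ℝ) * c - a - c > 0) :
    0 < mukaiR c (kappaR a c (a-1) (b+c)) (kappaR a c (a-1) (b+c)) ∧
    (∀ v : MukaiVR (a-1) (b+c),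
      mukaiR c v (kappaR a c (a-1) (b+c)) = 0 → v ≠ 0 → mukaiR c v v < 0) := by
  have ha0 : (0:ℚ) < a := by exact_mod_cast Nat.lt_of_lt_of_le Nat.zero_lt_two ha
  have hb0 : (0:ℚ) < b := by exact_mod_cast hb
  have hc0 : (0:ℚ) < c := by exact_mod_cast Nat.lt_of_lt_of_le Nat.zero_lt_two hc
  have keyQ : (a:ℚ)*b*c < a*b + b*c + c*a := by
    rw [gt_iff_lt, div_add_div _ _ (ne_of_gt ha0) (ne_of_gt hb0),
      div_add_div _ _ (by positivity) (ne_of_gt hc0), lt_div_iff₀ (by positivity), one_mul] at h1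
    nlinarith [h1]
  have key : (a:ℝ)*b*c < (a:ℝ)*b + b*c + c*a := by exact_mod_cast keyQ
  set A : ℝ := (a:ℝ) with hA
  set B : ℝ := (b:ℝ) with hB
  set C : ℝ := (c:ℝ) with hC
  have hAc : ((a-1 : ℕ) : ℝ) = A - 1 := by
    push_cast [Nat.cast_sub (le_trans one_le_two ha)]; ring
  have hBC : ((b+c : ℕ) : ℝ) = B + C := by push_cast; ring
  have hA2 : (2:ℝ) ≤ A := by rw [hA]; exact_mod_cast ha
  have hB1 : (1:ℝ) ≤ B := by rw [hB]; exact_mod_cast hb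
  have hC2 : (2:ℝ) ≤ C := by rw [hC]; exact_mod_cast hc
  constructor
  · simp only [mukaiR, kappaR, Finset.sum_const, Finset.card_univ, Fintype.card_fin,
      nsmul_eq_mul, hAc, hBC]
    nlinarith [key, h2, mul_pos (sub_pos.mpr h2) (sub_pos.mpr key)]
  · intro v hperp hv0
    set s : ℝ := ∑ i, v.1 i with hs
    set t : ℝ := ∑ j, v.2 j with ht
    have hk : (A*C - A - C) * (C * s + t) = 0 := by
      simp only [mukaiR, kappaR, ← Finset.sum_mul, Finset.sum_const, Finset.card_univ,
        Fintype.card_fin, nsmul_eq_mul, hAc, hBC] at hperp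
      nlinarith [hperp]
    have hts : t = -(C * s) := by
      have := mul_eq_zero.mp hk
      rcases this with h | h
      · exact absurd h (ne_of_gt h2)
      · linarith
    have cs1 : s ^ 2 ≤ (A - 1) * ∑ i, v.1 i ^ 2 := by
      have := sq_sum_le_card_mul_sum_sq (s := (univ : Finset (Fin (a-1)))) (f := v.1)
      simpa [hs, card_univ, hAc] using this
    have cs2 : t ^ 2 ≤ (B + C) * ∑ j, v.2 j ^ 2 := by
      have := sq_sum_le_card_mul_sum_sq (s := (univ : Finset (Fin (b+c)))) (f := v.2)
      simpa [ht, card_univ, hBC] using this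
    have hS1 : (0:ℝ) ≤ ∑ i, v.1 i ^ 2 := Finset.sum_nonneg fun i _ => sq_nonneg _
    have hS2 : (0:ℝ) ≤ ∑ j, v.2 j ^ 2 := Finset.sum_nonneg fun j _ => sq_nonneg _
    have hQ : mukaiR c v v = (C - 1) * s ^ 2 - (∑ i, v.1 i ^ 2) - (∑ j, v.2 j ^ 2) := by
      simp only [mukaiR, pow_two]
      rw [← hs]; ring
    rw [hQ]
    by_cases hsz : s = 0
    · have htz : t = 0 := by rw [hts, hsz]; ring
      have hne : v.1 ≠ 0 ∨ v.2 ≠ 0 := by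
        by_contra hcon
        push_neg at hcon
        exact hv0 (Prod.ext hcon.1 hcon.2)
      have hpos : 0 < (∑ i, v.1 i ^ 2) + (∑ j, v.2 j ^ 2) := by
        rcases hne with h | h
        · obtain ⟨i, hi⟩ := Function.ne_iff.mp h
          have : 0 < ∑ i, v.1 i ^ 2 :=
            Finset.sum_pos' (fun i _ => sq_nonneg _) ⟨i, Finset.mem_univ i, pow_two_pos_of_ne_zero hi⟩
          linarith
        · obtain ⟨j, hj⟩ := Function.ne_iff.mp h
          have : 0 < ∑ j, v.2 j ^ 2 :=
            Finset.sum_pos' (fun j _ => sq_nonneg _) ⟨j, Finset.mem_univ j, pow_two_pos_of_ne_zero hj⟩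
          linarith
      have hz : (C-1) * s ^ 2 = 0 := by rw [hsz]; ring
      linarith [hpos, hz]

    · have hs2 : 0 < s ^ 2 := by positivity
      have hAp : (0:ℝ) < A - 1 := by linarith
      have hBCp : (0:ℝ) < B + C := by linarith
      have hP : (C-1)*(A-1)*(B+C) - (B+C) - (A-1)*C^2 < 0 := by
        have he : (C-1)*(A-1)*(B+C) - (B+C) - (A-1)*C^2 = -(A*B + B*C + C*A - A*B*C) := by ring
        rw [he]; linarith [key]
      have h1' : (B+C) * s^2 ≤ (B+C)*((A-1) * ∑ i, v.1 i ^ 2) :=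
        mul_le_mul_of_nonneg_left cs1 hBCp.le
      have cs2' : (C*s) ^ 2 ≤ (B + C) * ∑ j, v.2 j ^ 2 := by
        rw [hts, neg_sq] at cs2; exact cs2
      have h2' : (A-1) * (C*s)^2 ≤ (A-1)*((B+C) * ∑ j, v.2 j ^ 2) :=
        mul_le_mul_of_nonneg_left cs2' hAp.le
      nlinarith [h1', h2', mul_pos hAp hBCp, hP, mul_pos hs2 (mul_pos hAp hBCp)]
end
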